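/- arXiv:1706.06219 — 5 statements merged into one kernel-verified Lean document; each statement's English description precedes it below -/
import Mathlib

section
/- Let X and Y be complex Banach spaces, let l ≥ 1, let P : X → Y be a compact continuous l-homogeneous polynomial, and let δ > 0. Then there exist finitely many functionals y₁*, …, y_N* in the closed unit ball of the dual space Y* such that for every strongly measurable f : 𝕋 → X with ‖f(t)‖_X ≤ 1 for almost every t, and for every k ∈ ℤ, one has ‖(P∘f)^̂(k)‖_Y ≤ δ/2 + max_{1 ≤ j ≤ N} |y_j*((P∘f)^̂(k))|. -/
/-
The Fourier coefficients of `P ∘ f` are averages of `e^{-ikt} P (f t)`, so all of them lie in the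
closed convex hull of `𝔻 · P(B_X)`, which is compact. On a totally bounded set the norm is
approximated within `δ/2` by finitely many functionals of norm at most one: Hahn–Banach
functionals norming the points of a `δ/4`-net.
-/

open MeasureTheory Set Metric
open scoped Pointwise

section NormingFunctionals

variable {𝕜 E : Type*} [RCLike 𝕜] [NormedAddCommGroup E] [NormedSpace 𝕜 E]

theorem Set.Finite.exists_fin_norming_functionals {t : Set E} (ht : t.Finite) :
    ∃ (N : ℕ) (y : Fin N → E →L[𝕜] 𝕜), 0 < N ∧ (∀ j, ‖y j‖ ≤ 1) ∧
      ∀ z ∈ t, ∃ j, ‖y j z‖ = ‖z‖ := by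
  classical
  set s := insert 0 ht.toFinset
  choose y hy1 hyz using fun j : Fin s.card => exists_dual_vector'' 𝕜 (s.equivFin.symm j : E)
  refine ⟨s.card, y, Finset.card_pos.mpr (Finset.insert_nonempty _ _), hy1, fun z hz => ?_⟩
  have hzs : z ∈ s := Finset.mem_insert_of_mem (ht.mem_toFinset.mpr hz)
  refine ⟨s.equivFin ⟨z, hzs⟩, ?_⟩
  have := hyz (s.equivFin ⟨z, hzs⟩)
  rw [Equiv.symm_apply_apply] at this
  rw [this, RCLike.norm_ofReal, abs_norm]

theorem TotallyBounded.exists_fin_norming_functionals {K : Set E} (hK : TotallyBounded K)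
    {ε : ℝ} (hε : 0 < ε) :
    ∃ (N : ℕ) (y : Fin N → E →L[𝕜] 𝕜), 0 < N ∧ (∀ j, ‖y j‖ ≤ 1) ∧
      ∀ v ∈ K, ‖v‖ ≤ ε + ⨆ j, ‖y j v‖ := by
  obtain ⟨t, htf, hKt⟩ := Metric.totallyBounded_iff.mp hK (ε / 2) (half_pos hε)
  obtain ⟨N, y, hN, hy1, hyt⟩ := htf.exists_fin_norming_functionals (𝕜 := 𝕜)
  refine ⟨N, y, hN, hy1, fun v hv => ?_⟩
  obtain ⟨z, hzt, hvball⟩ := mem_iUnion₂.mp (hKt hv)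
  obtain ⟨j, hj⟩ := hyt z hzt
  have hvz : ‖v - z‖ < ε / 2 := by rwa [← dist_eq_norm, ← mem_ball]
  have hyvz : ‖y j (v - z)‖ ≤ ‖v - z‖ := (y j).le_of_opNorm_le (hy1 j) _ |>.trans_eq (one_mul _)
  calc ‖v‖ ≤ ‖z‖ + ‖v - z‖ := norm_le_norm_add_norm_sub' v z
    _ = ‖y j v - y j (v - z)‖ + ‖v - z‖ := by rw [← map_sub, sub_sub_cancel, hj]
    _ ≤ ‖y j v‖ + 2 * ‖v - z‖ := by linarith [norm_sub_le (y j v) (y j (v - z))]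
    _ ≤ ε + ⨆ j, ‖y j v‖ := by
        linarith [le_ciSup (Finite.bddAbove_range fun i => ‖y i v‖) j]

end NormingFunctionals

theorem interval_average_mem_closure_convexHull {E : Type*} [NormedAddCommGroup E]
    [NormedSpace ℝ E] [CompleteSpace E] {S : Set E} (hS : Bornology.IsBounded S) {a b : ℝ}
    (hab : a < b) {g : ℝ → E} (hg : AEStronglyMeasurable g (volume.restrict (Ioc a b)))
    (hgS : ∀ᵐ t ∂volume.restrict (Ioc a b), g t ∈ S) :
    (⨍ t in a..b, g t) ∈ closure (convexHull ℝ S) := by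
  obtain ⟨R, hR⟩ := hS.exists_norm_le
  rw [uIoc_of_le hab.le]
  refine (convex_convexHull ℝ S).set_average_mem_closure ?_ measure_Ioc_lt_top.ne
    (hgS.mono fun t ht => subset_convexHull ℝ S ht)
    (Integrable.of_bound hg R (hgS.mono fun t ht => hR _ ht))
  simpa using hab

theorem stmt2_general {X Y : Type*} [NormedAddCommGroup X] [NormedSpace ℂ X]
    [NormedAddCommGroup Y] [NormedSpace ℂ Y] [CompleteSpace Y]
    (l : ℕ)
    (M : ContinuousMultilinearMap ℂ (fun _ : Fin l => X) Y)
    (P : X → Y) (hP : ∀ x, P x = M (fun _ => x))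
    (hPcomp : IsCompact (closure (P '' Metric.closedBall 0 1)))
    (δ : ℝ) (hδ : 0 < δ) :
    ∃ (N : ℕ) (y : Fin N → (Y →L[ℂ] ℂ)), 0 < N ∧ (∀ j, ‖y j‖ ≤ 1) ∧
      ∀ f : ℝ → X,
        AEStronglyMeasurable f (volume.restrict (Set.Ioc (0:ℝ) (2 * Real.pi))) →
        (∀ᵐ t ∂(volume.restrict (Set.Ioc (0:ℝ) (2 * Real.pi))), ‖f t‖ ≤ 1) →
        ∀ k : ℤ,
          ‖(2 * Real.pi : ℂ)⁻¹ •
              ∫ t in (0:ℝ)..(2 * Real.pi),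
                Complex.exp (-Complex.I * (k : ℂ) * (t : ℂ)) • P (f t)‖ ≤
            δ / 2 +
              ⨆ j : Fin N,
                ‖y j ((2 * Real.pi : ℂ)⁻¹ •
                    ∫ t in (0:ℝ)..(2 * Real.pi),
                      Complex.exp (-Complex.I * (k : ℂ) * (t : ℂ)) • P (f t))‖ := by
  set S : Set Y := closedBall (0 : ℂ) 1 • closure (P '' closedBall 0 1)
  have hS : IsCompact S := (isCompact_closedBall 0 1).smul_set hPcomp
  obtain ⟨N, y, hN, hy1, hy⟩ := (totallyBounded_convexHull.mpr hS.totallyBounded).closure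
    |>.exists_fin_norming_functionals (𝕜 := ℂ) (half_pos hδ)
  refine ⟨N, y, hN, hy1, fun f hf hf1 k => hy _ ?_⟩
  have hPc : Continuous P := by
    rw [funext hP]
    exact M.cont.comp (continuous_pi fun _ => continuous_id)
  have hcoef := interval_average_mem_closure_convexHull hS.isBounded Real.two_pi_pos
    (g := fun t => Complex.exp (-Complex.I * k * t) • P (f t))
    ((by fun_prop : Continuous fun t : ℝ => Complex.exp (-Complex.I * k * t)).aestronglyMeasurable
      |>.smul (hPc.comp_aestronglyMeasurable hf))
    (hf1.mono fun t ht => smul_mem_smul (by simp [Complex.norm_exp])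
      (subset_closure (mem_image_of_mem P (mem_closedBall_zero_iff.mpr ht))))
  rwa [interval_average_eq, sub_zero, ← Complex.coe_smul, Complex.ofReal_inv,
    Complex.ofReal_mul, Complex.ofReal_ofNat] at hcoef

/-- If `P` is a compact continuous `l`-homogeneous polynomial between
complex Banach spaces and `δ > 0`, then there are finitely many functionals
`y₁*, …, y_N*` in the closed unit ball of `Y*` such that for every strongly measurable
`f : 𝕋 → X` with `‖f t‖ ≤ 1` a.e. and every `k ∈ ℤ`,
`‖(P∘f)^(k)‖ ≤ δ/2 + max_j |y_j*((P∘f)^(k))|`. -/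
theorem stmt2 {X Y : Type*} [NormedAddCommGroup X] [NormedSpace ℂ X] [CompleteSpace X]
    [NormedAddCommGroup Y] [NormedSpace ℂ Y] [CompleteSpace Y]
    (l : ℕ) (hl : 1 ≤ l)
    (M : ContinuousMultilinearMap ℂ (fun _ : Fin l => X) Y)
    (P : X → Y) (hP : ∀ x, P x = M (fun _ => x))
    (hPcomp : IsCompact (closure (P '' Metric.closedBall 0 1)))
    (δ : ℝ) (hδ : 0 < δ) :
    ∃ (N : ℕ) (y : Fin N → (Y →L[ℂ] ℂ)), 0 < N ∧ (∀ j, ‖y j‖ ≤ 1) ∧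
      ∀ f : ℝ → X,
        AEStronglyMeasurable f (volume.restrict (Set.Ioc (0:ℝ) (2 * Real.pi))) →
        (∀ᵐ t ∂(volume.restrict (Set.Ioc (0:ℝ) (2 * Real.pi))), ‖f t‖ ≤ 1) →
        ∀ k : ℤ,
          ‖(2 * Real.pi : ℂ)⁻¹ •
              ∫ t in (0:ℝ)..(2 * Real.pi),
                Complex.exp (-Complex.I * (k : ℂ) * (t : ℂ)) • P (f t)‖ ≤
            δ / 2 +
              ⨆ j : Fin N,
                ‖y j ((2 * Real.pi : ℂ)⁻¹ •
                    ∫ t in (0:ℝ)..(2 * Real.pi),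
                      Complex.exp (-Complex.I * (k : ℂ) * (t : ℂ)) • P (f t))‖ :=
  stmt2_general l M P hP hPcomp δ hδ
end

section
/- Let X and Y be complex Banach spaces, let l ≥ 1, let P : X → Y be a compact continuous l-homogeneous polynomial, and let δ > 0. Then there exists L = L(δ) ∈ ℕ such that for every strongly measurable f : 𝕋 → X with ‖f(t)‖_X ≤ 1 for almost every t, the set {k ∈ ℤ : ‖(P∘f)^̂(k)‖_Y ≥ δ} has at most L elements. -/
/-!
By compactness, `P ∘ f` lies within `δ / 3` of a simple function `∑ₛ 1_{Aₛ} • s`, where `s` runs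
over a fixed finite `δ / 3`-net of `P(B_X)` and only the sets `Aₛ` depend on `f`. The error has
Fourier coefficients of size at most `δ / 3`, so a coefficient of `P ∘ f` of size `≥ δ` forces some
scalar indicator `1_{Aₛ}` to have a coefficient of size `≥ η`, where `η` depends only on the net.
By Bessel's inequality each indicator has at most `⌈η⁻²⌉` such coefficients.
-/

open MeasureTheory Filter Set AddCircle Real

lemma Set.encard_setOf_le_le_of_hasSum_sq {ι : Type*} {a : ι → ℝ} {C η : ℝ}
    (ha : HasSum (fun i => a i ^ 2) C) (hη : 0 < η) :
    {i | η ≤ a i}.encard ≤ ⌈C / η ^ 2⌉₊ := by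
  have hfin : {i | η ≤ a i}.Finite := by
    have hsmall := ha.summable.tendsto_cofinite_zero.eventually (gt_mem_nhds (pow_pos hη 2))
    refine (eventually_cofinite.1 hsmall).subset fun i hi => ?_
    exact not_lt.2 (pow_le_pow_left₀ hη.le hi 2)
  rw [hfin.encard_eq_coe_toFinset_card, Nat.cast_le]
  have hcard : (hfin.toFinset.card : ℝ) * η ^ 2 ≤ C :=
    calc (hfin.toFinset.card : ℝ) * η ^ 2 = ∑ _i ∈ hfin.toFinset, η ^ 2 := by simp
      _ ≤ ∑ i ∈ hfin.toFinset, a i ^ 2 := Finset.sum_le_sum fun i hi =>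
          pow_le_pow_left₀ hη.le (hfin.mem_toFinset.1 hi) 2
      _ ≤ C := sum_le_hasSum _ (fun i _ => sq_nonneg (a i)) ha
  exact_mod_cast ((le_div_iff₀ (by positivity)).2 hcard).trans (Nat.le_ceil _)

lemma TotallyBounded.exists_simpleFunc_dist_lt {E : Type*} [PseudoMetricSpace E]
    [MeasurableSpace E] [OpensMeasurableSpace E] [Nonempty E] {K : Set E}
    (hK : TotallyBounded K) {ε : ℝ} (hε : 0 < ε) :
    ∃ q : SimpleFunc E E, ∀ y ∈ K, dist (q y) y < ε := by
  obtain ⟨t, ht, hKt⟩ := Metric.totallyBounded_iff.1 hK ε hε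
  let l := ht.toFinset.toList
  let e : ℕ → E := fun k => l.getD k (Classical.arbitrary E)
  refine ⟨SimpleFunc.nearestPt e l.length, fun y hy => ?_⟩
  obtain ⟨x, hxt, hyx⟩ : ∃ x ∈ t, y ∈ Metric.ball x ε := by simpa using hKt hy
  obtain ⟨k, hk, rfl⟩ := List.mem_iff_getElem.1 (by simpa [l] using hxt : x ∈ l)
  have hnear := SimpleFunc.edist_nearestPt_le e y hk.le
  rw [show e k = l[k] from List.getD_eq_getElem _ _ hk] at hnear
  exact edist_lt_ofReal.1 (hnear.trans_lt (edist_lt_ofReal.2 (Metric.mem_ball'.1 hyx)))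

section FourierCoeff

variable {T : ℝ} [Fact (0 < T)] {E : Type*} [NormedAddCommGroup E] [NormedSpace ℂ E]

lemma norm_fourierCoeff_le {f : AddCircle T → E} {C : ℝ}
    (hf : ∀ᵐ x ∂haarAddCircle, ‖f x‖ ≤ C) (n : ℤ) : ‖fourierCoeff f n‖ ≤ C := by
  have hbd : ∀ᵐ x ∂haarAddCircle, ‖fourier (-n) x • f x‖ ≤ C :=
    hf.mono fun x hx => by rwa [norm_smul, fourier_apply, Circle.norm_coe, one_mul]
  rw [fourierCoeff]
  simpa only [probReal_univ, mul_one] using norm_integral_le_of_norm_le_const hbd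

lemma fourierCoeff_smul_const [CompleteSpace E] (c : AddCircle T → ℂ) (v : E) (n : ℤ) :
    fourierCoeff (fun x => c x • v) n = fourierCoeff c n • v := by
  simp_rw [fourierCoeff, smul_smul, smul_eq_mul, integral_smul_const]

lemma fourierCoeff_simpleFunc [CompleteSpace E] (g : SimpleFunc (AddCircle T) E) (n : ℤ) :
    fourierCoeff g n =
      ∑ s ∈ g.range, fourierCoeff ((g ⁻¹' {s}).indicator (1 : AddCircle T → ℂ)) n • s := by
  have hg : ⇑g = ∑ s ∈ g.range, fun x => (g ⁻¹' {s}).indicator (1 : AddCircle T → ℂ) x • s := by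
    ext x
    rw [Finset.sum_apply, Finset.sum_eq_single (g x)]
    · simp
    · intro s _ hs
      simp [Ne.symm hs]
    · simp
  conv_lhs => rw [hg]
  rw [fourierCoeff.sum _ _ fun s _ => ((integrable_const 1).indicator
    (g.measurableSet_fiber s)).smul_const s, Finset.sum_apply]
  simp_rw [fourierCoeff_smul_const]

lemma norm_fourierCoeff_simpleFunc_le [CompleteSpace E] (g : SimpleFunc (AddCircle T) E) (n : ℤ) :
    ‖fourierCoeff g n‖ ≤
      ∑ s ∈ g.range, ‖fourierCoeff ((g ⁻¹' {s}).indicator (1 : AddCircle T → ℂ)) n‖ * ‖s‖ := by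
  rw [fourierCoeff_simpleFunc]
  exact (norm_sum_le _ _).trans_eq (by simp only [norm_smul])

lemma norm_fourierCoeff_sub_simpleFunc_le {F : AddCircle T → E}
    (hF : AEStronglyMeasurable F haarAddCircle) (g : SimpleFunc (AddCircle T) E) {ε : ℝ}
    (hFg : ∀ᵐ x ∂haarAddCircle, ‖F x - g x‖ ≤ ε) (n : ℤ) :
    ‖fourierCoeff F n - fourierCoeff g n‖ ≤ ε := by
  have hsplit : fourierCoeff F = fourierCoeff (F - ⇑g) + fourierCoeff g := by
    rw [← fourierCoeff.add (Integrable.of_bound (hF.sub g.aestronglyMeasurable) ε hFg)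
      g.integrable_of_isFiniteMeasure, sub_add_cancel]
  rw [hsplit, Pi.add_apply, add_sub_cancel_right]
  exact norm_fourierCoeff_le hFg n

lemma hasSum_sq_fourierCoeff_of_memLp {u : AddCircle T → ℂ} (hu : MemLp u 2 haarAddCircle) :
    HasSum (fun n => ‖fourierCoeff u n‖ ^ 2) (∫ x, ‖u x‖ ^ 2 ∂haarAddCircle) := by
  convert hasSum_sq_fourierCoeff hu.toLp using 1
  · simp [fourierCoeff_congr_ae hu.coeFn_toLp]
  · exact integral_congr_ae (hu.coeFn_toLp.mono fun x hx => by simp [hx])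

lemma hasSum_sq_fourierCoeff_indicator {A : Set (AddCircle T)} (hA : MeasurableSet A) :
    HasSum (fun n => ‖fourierCoeff (A.indicator (1 : AddCircle T → ℂ)) n‖ ^ 2)
      (haarAddCircle.real A) := by
  have hnorm : (fun x => ‖A.indicator (1 : AddCircle T → ℂ) x‖ ^ 2) = A.indicator 1 := by
    ext x
    by_cases hx : x ∈ A <;> simp [hx]
  have hmem : MemLp (A.indicator (1 : AddCircle T → ℂ)) 2 haarAddCircle :=
    memLp_indicator_const 2 hA 1 (Or.inr (measure_ne_top _ _))
  simpa only [hnorm, integral_indicator_one hA] using hasSum_sq_fourierCoeff_of_memLp hmem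

lemma MeasureTheory.SimpleFunc.encard_iUnion_le_norm_fourierCoeff_indicator_le {α : Type*}
    (g : SimpleFunc (AddCircle T) α) {η : ℝ} (hη : 0 < η) :
    (⋃ s ∈ g.range,
        {n : ℤ | η ≤ ‖fourierCoeff ((g ⁻¹' {s}).indicator (1 : AddCircle T → ℂ)) n‖}).encard ≤
      (g.range.card * ⌈1 / η ^ 2⌉₊ : ℕ) :=
  calc _ ≤ ∑ s ∈ g.range,
        {n : ℤ | η ≤ ‖fourierCoeff ((g ⁻¹' {s}).indicator (1 : AddCircle T → ℂ)) n‖}.encard :=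
        Finset.set_encard_biUnion_le _ _
    _ ≤ ∑ _s ∈ g.range, (⌈1 / η ^ 2⌉₊ : ℕ∞) := Finset.sum_le_sum fun s _ =>
        (encard_setOf_le_le_of_hasSum_sq
          (hasSum_sq_fourierCoeff_indicator (g.measurableSet_fiber s)) hη).trans <|
        Nat.cast_le.2 <| Nat.ceil_mono <| div_le_div_of_nonneg_right measureReal_le_one (by positivity)
    _ = (g.range.card * ⌈1 / η ^ 2⌉₊ : ℕ) := by
        rw [Finset.sum_const, nsmul_eq_mul]
        push_cast
        rfl

end FourierCoeff

lemma TotallyBounded.exists_encard_setOf_le_norm_fourierCoeff_le {T : ℝ} [Fact (0 < T)]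
    {E : Type*} [NormedAddCommGroup E] [NormedSpace ℂ E] [CompleteSpace E] {K : Set E}
    (hK : TotallyBounded K) {δ : ℝ} (hδ : 0 < δ) :
    ∃ L : ℕ, ∀ F : AddCircle T → E, AEStronglyMeasurable F haarAddCircle →
      (∀ᵐ x ∂haarAddCircle, F x ∈ K) → {n : ℤ | δ ≤ ‖fourierCoeff F n‖}.encard ≤ L := by
  borelize E
  obtain ⟨q, hq⟩ := hK.exists_simpleFunc_dist_lt (div_pos hδ three_pos)
  set R := ∑ s ∈ q.range, ‖s‖
  have hR : 0 ≤ R := Finset.sum_nonneg fun s _ => norm_nonneg s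
  set η := δ / (3 * (R + 1))
  have hη : 0 < η := by positivity
  have hηR : η * R ≤ δ / 3 := by
    rw [div_mul_eq_mul_div, div_le_div_iff₀ (by positivity) three_pos]
    nlinarith
  refine ⟨q.range.card * ⌈1 / η ^ 2⌉₊, fun F hF hFK => ?_⟩
  obtain ⟨F', hF'sm, hFF'⟩ := id hF
  set g := q.comp F' hF'sm.measurable
  have hg_range : g.range ⊆ q.range := q.range_comp_subset_range _
  have hclose : ∀ n, ‖fourierCoeff F n - fourierCoeff g n‖ ≤ δ / 3 :=
    norm_fourierCoeff_sub_simpleFunc_le hF g <| by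
      filter_upwards [hFK, hFF'] with x hx hxF
      rw [← dist_eq_norm, dist_comm, hxF]
      exact (hq _ (hxF ▸ hx)).le
  have hlarge : {n : ℤ | δ ≤ ‖fourierCoeff F n‖} ⊆ ⋃ s ∈ g.range,
      {n | η ≤ ‖fourierCoeff ((g ⁻¹' {s}).indicator (1 : AddCircle T → ℂ)) n‖} := by
    intro n (hn : δ ≤ ‖fourierCoeff F n‖)
    by_contra hsmall
    simp only [mem_iUnion, mem_ofPred_eq, not_exists, not_le] at hsmall
    have hg : ‖fourierCoeff g n‖ ≤ δ / 3 :=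
      calc ‖fourierCoeff g n‖
          ≤ ∑ s ∈ g.range, ‖fourierCoeff ((g ⁻¹' {s}).indicator (1 : AddCircle T → ℂ)) n‖ * ‖s‖ :=
            norm_fourierCoeff_simpleFunc_le g n
        _ ≤ ∑ s ∈ g.range, η * ‖s‖ := Finset.sum_le_sum fun s hs =>
            mul_le_mul_of_nonneg_right (hsmall s hs).le (norm_nonneg s)
        _ ≤ η * R := by
            rw [← Finset.mul_sum]
            exact mul_le_mul_of_nonneg_left (Finset.sum_le_sum_of_subset_of_nonneg hg_range
              fun s _ _ => norm_nonneg s) hη.le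
        _ ≤ δ / 3 := hηR
    linarith [hclose n, norm_sub_norm_le (fourierCoeff F n) (fourierCoeff g n)]
  calc {n : ℤ | δ ≤ ‖fourierCoeff F n‖}.encard
      ≤ _ := encard_le_encard hlarge
    _ ≤ (g.range.card * ⌈1 / η ^ 2⌉₊ : ℕ) :=
        g.encard_iUnion_le_norm_fourierCoeff_indicator_le hη
    _ ≤ (q.range.card * ⌈1 / η ^ 2⌉₊ : ℕ) := by
        exact_mod_cast Nat.mul_le_mul_right _ (Finset.card_le_card hg_range)

section Lift

variable {T : ℝ} [hT : Fact (0 < T)]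

lemma AddCircle.haarAddCircle_absolutelyContinuous_volume :
    (haarAddCircle : Measure (AddCircle T)) ≪ volume := by
  rw [volume_eq_smul_haarAddCircle]
  exact Measure.absolutelyContinuous_smul (by simpa using hT.out)

lemma AddCircle.measurePreserving_coe_equivIoc (a : ℝ) :
    MeasurePreserving (fun x : AddCircle T => (equivIoc T a x : ℝ)) volume
      (volume.restrict (Ioc a (a + T))) :=
  (measurePreserving_subtype_coe measurableSet_Ioc).comp (measurePreserving_equivIoc T)

lemma MeasureTheory.AEStronglyMeasurable.liftIoc {α : Type*} [TopologicalSpace α] {a : ℝ}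
    {f : ℝ → α} (hf : AEStronglyMeasurable f (volume.restrict (Ioc a (a + T)))) :
    AEStronglyMeasurable (liftIoc T a f) haarAddCircle :=
  (hf.comp_measurePreserving (measurePreserving_coe_equivIoc a)).mono_ac
    haarAddCircle_absolutelyContinuous_volume

lemma AddCircle.ae_liftIoc {α : Type*} {a : ℝ} {f : ℝ → α} {p : α → Prop}
    (hf : ∀ᵐ t ∂(volume.restrict (Ioc a (a + T))), p (f t)) :
    ∀ᵐ x ∂haarAddCircle, p (liftIoc T a f x) :=
  haarAddCircle_absolutelyContinuous_volume.ae_le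
    ((measurePreserving_coe_equivIoc a).quasiMeasurePreserving.ae (p := fun t => p (f t)) hf)

lemma fourierCoeff_liftIoc_two_pi [Fact (0 < 2 * π)] {E : Type*} [NormedAddCommGroup E]
    [NormedSpace ℂ E] (F : ℝ → E) (k : ℤ) :
    fourierCoeff (liftIoc (2 * π) 0 F) k =
      (2 * π : ℂ)⁻¹ • ∫ t in (0 : ℝ)..(2 * π), Complex.exp (-Complex.I * k * t) • F t := by
  rw [fourierCoeff_eq_intervalIntegral _ k 0, zero_add, one_div, ← Complex.coe_smul]
  push_cast
  congr 1
  refine intervalIntegral.integral_congr_ae (ae_of_all _ fun t ht => ?_)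
  rw [uIoc_of_le two_pi_pos.le, ← zero_add (2 * π)] at ht
  rw [liftIoc_coe_apply ht, fourier_coe_apply]
  congr 2
  field_simp
  push_cast
  ring

end Lift

theorem stmt3_general {X Y : Type*} [NormedAddCommGroup X] [NormedSpace ℂ X]
    [NormedAddCommGroup Y] [NormedSpace ℂ Y] [CompleteSpace Y]
    (l : ℕ)
    (M : ContinuousMultilinearMap ℂ (fun _ : Fin l => X) Y)
    (P : X → Y) (hP : ∀ x, P x = M (fun _ => x))
    (hPcomp : IsCompact (closure (P '' Metric.closedBall 0 1)))
    (δ : ℝ) (hδ : 0 < δ) :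
    ∃ L : ℕ, ∀ f : ℝ → X,
      AEStronglyMeasurable f (volume.restrict (Set.Ioc (0:ℝ) (2 * Real.pi))) →
      (∀ᵐ t ∂(volume.restrict (Set.Ioc (0:ℝ) (2 * Real.pi))), ‖f t‖ ≤ 1) →
      {k : ℤ | δ ≤
          ‖(2 * Real.pi : ℂ)⁻¹ •
              ∫ t in (0:ℝ)..(2 * Real.pi),
                Complex.exp (-Complex.I * (k : ℂ) * (t : ℂ)) • P (f t)‖}.Finite ∧
        {k : ℤ | δ ≤
          ‖(2 * Real.pi : ℂ)⁻¹ •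
              ∫ t in (0:ℝ)..(2 * Real.pi),
                Complex.exp (-Complex.I * (k : ℂ) * (t : ℂ)) • P (f t)‖}.ncard ≤ L := by
  have : Fact (0 < 2 * π) := ⟨two_pi_pos⟩
  have hP_cont : Continuous P := by
    rw [funext hP]
    fun_prop
  obtain ⟨L, hL⟩ :=
    hPcomp.totallyBounded.exists_encard_setOf_le_norm_fourierCoeff_le (T := 2 * π) hδ
  refine ⟨L, fun f hf hf_le => ?_⟩
  have hF : AEStronglyMeasurable (liftIoc (2 * π) 0 (P ∘ f)) haarAddCircle := by
    rw [← zero_add (2 * π)] at hf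
    exact (hP_cont.comp_aestronglyMeasurable hf).liftIoc
  have hFK : ∀ᵐ x ∂haarAddCircle,
      liftIoc (2 * π) 0 (P ∘ f) x ∈ closure (P '' Metric.closedBall 0 1) := by
    rw [← zero_add (2 * π)] at hf_le
    exact ae_liftIoc (hf_le.mono fun t ht =>
      subset_closure (mem_image_of_mem P (mem_closedBall_zero_iff.2 ht)))
  have hcoeff : ∀ k : ℤ, (2 * π : ℂ)⁻¹ • ∫ t in (0 : ℝ)..(2 * π),
      Complex.exp (-Complex.I * k * t) • P (f t) = fourierCoeff (liftIoc (2 * π) 0 (P ∘ f)) k :=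
    fun k => (fourierCoeff_liftIoc_two_pi _ k).symm
  simp only [hcoeff]
  exact encard_le_coe_iff_finite_ncard_le.1 (hL _ hF hFK)

/-- If `P` is a compact continuous `l`-homogeneous polynomial between
complex Banach spaces and `δ > 0`, then there exists `L = L(δ)` such that for every
strongly measurable `f : 𝕋 → X` with `‖f t‖ ≤ 1` a.e., the set of `k ∈ ℤ` with
`‖(P∘f)^(k)‖ ≥ δ` has at most `L` elements. -/
theorem stmt3 {X Y : Type*} [NormedAddCommGroup X] [NormedSpace ℂ X] [CompleteSpace X]
    [NormedAddCommGroup Y] [NormedSpace ℂ Y] [CompleteSpace Y]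
    (l : ℕ) (hl : 1 ≤ l)
    (M : ContinuousMultilinearMap ℂ (fun _ : Fin l => X) Y)
    (P : X → Y) (hP : ∀ x, P x = M (fun _ => x))
    (hPcomp : IsCompact (closure (P '' Metric.closedBall 0 1)))
    (δ : ℝ) (hδ : 0 < δ) :
    ∃ L : ℕ, ∀ f : ℝ → X,
      AEStronglyMeasurable f (volume.restrict (Set.Ioc (0:ℝ) (2 * Real.pi))) →
      (∀ᵐ t ∂(volume.restrict (Set.Ioc (0:ℝ) (2 * Real.pi))), ‖f t‖ ≤ 1) →
      {k : ℤ | δ ≤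
          ‖(2 * Real.pi : ℂ)⁻¹ •
              ∫ t in (0:ℝ)..(2 * Real.pi),
                Complex.exp (-Complex.I * (k : ℂ) * (t : ℂ)) • P (f t)‖}.Finite ∧
        {k : ℤ | δ ≤
          ‖(2 * Real.pi : ℂ)⁻¹ •
              ∫ t in (0:ℝ)..(2 * Real.pi),
                Complex.exp (-Complex.I * (k : ℂ) * (t : ℂ)) • P (f t)‖}.ncard ≤ L :=
  stmt3_general l M P hP hPcomp δ hδ
end

section
/- Let X and Y be complex Banach spaces, let l ≥ 1, and let P : X → Y be a compact continuous l-homogeneous polynomial with polar P̃. Fix k ≥ 1. For j = 1, …, l let (f_n^{(j)})_{n≥1} be sequences of strongly measurable functions 𝕋 → X with ‖f_n^{(j)}(t)‖_X ≤ 1 for almost every t and every n. If for every functional y* in the closed unit ball of Y* one has lim_{n→∞} ∫₀^{2π} |y*(P̃(f_n^{(1)}(t), …, f_n^{(l)}(t)))|^k dt = 0, then lim_{n→∞} ∫₀^{2π} ‖P̃(f_n^{(1)}(t), …, f_n^{(l)}(t))‖_Y^k dt = 0. -/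
/-!
Sign polarization writes `M (x₁, …, x_l)` as a fixed linear combination of values of `P` at
points of the unit ball, so `M` maps the product of unit balls into a compact set `K`. Since
every point has a norming functional, on `K` the function `‖y‖^k` exceeds the largest of finitely
many `|φ y|^k` (`‖φ‖ ≤ 1`) by at most `δ`; hence `‖M(f_n)‖^k ≤ ∑ φ, |φ (M(f_n))|^k + δ`
pointwise, and integrating reduces the strong convergence to finitely many weak ones.
-/

open MeasureTheory Filter Topology Finset Function

theorem Continuous.comp_stronglyMeasurable_pi {α ι Z : Type*} [MeasurableSpace α] [Countable ι]
    {X : ι → Type*} [∀ i, TopologicalSpace (X i)]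
    [∀ i, TopologicalSpace.PseudoMetrizableSpace (X i)] [TopologicalSpace Z]
    {Φ : (∀ i, X i) → Z} (hΦ : Continuous Φ) {g : ∀ i, α → X i}
    (hg : ∀ i, StronglyMeasurable (g i)) :
    StronglyMeasurable (fun t => Φ (fun i => g i t)) := by
  let _ := fun i => borel (X i)
  have : ∀ i, BorelSpace (X i) := fun i => ⟨rfl⟩
  -- the product σ-algebra is the Borel one only on separable factors: pass to closed ranges
  let C i := closure (Set.range (g i))
  have : ∀ i, SecondCountableTopology (C i) := fun i =>
    (hg i).isSeparable_range.closure.secondCountableTopology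
  let h : α → ∀ i, C i := fun t i => ⟨g i t, subset_closure (Set.mem_range_self t)⟩
  have hh : StronglyMeasurable h :=
    (measurable_pi_lambda _ fun i => (hg i).measurable.subtype_mk).stronglyMeasurable
  have hΦC : Continuous fun y : ∀ i, C i => Φ fun i => (y i : X i) :=
    hΦ.comp (continuous_pi fun i => continuous_subtype_val.comp (continuous_apply i))
  exact hΦC.comp_stronglyMeasurable hh

theorem Continuous.comp_aestronglyMeasurable_pi {α ι Z : Type*} [MeasurableSpace α]
    {μ : Measure α} [Countable ι] {X : ι → Type*} [∀ i, TopologicalSpace (X i)]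
    [∀ i, TopologicalSpace.PseudoMetrizableSpace (X i)] [TopologicalSpace Z]
    {Φ : (∀ i, X i) → Z} (hΦ : Continuous Φ) {g : ∀ i, α → X i}
    (hg : ∀ i, AEStronglyMeasurable (g i) μ) :
    AEStronglyMeasurable (fun t => Φ (fun i => g i t)) μ := by
  refine ⟨_, hΦ.comp_stronglyMeasurable_pi fun i => (hg i).stronglyMeasurable_mk, ?_⟩
  filter_upwards [ae_all_iff.2 fun i => (hg i).ae_eq_mk] with t ht
  simp only [funext ht]

def boolSign {R : Type*} [Ring R] (b : Bool) : R := if b then 1 else -1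

theorem sum_boolSign_pow {R : Type*} [Ring R] (m : ℕ) :
    ∑ b : Bool, (boolSign b : R) ^ m = 1 + (-1) ^ m := by
  simp [boolSign]

theorem norm_boolSign {𝕜 : Type*} [NormedRing 𝕜] [NormOneClass 𝕜] (b : Bool) :
    ‖(boolSign b : 𝕜)‖ = 1 := by
  cases b <;> simp [boolSign]

section Polarization

variable {R ι : Type*} [CommRing R] [Fintype ι] [DecidableEq ι]

-- The summand is `∏ j, boolSign (ε j) ^ (1 + #(g⁻¹ j))`, whose average over `ε` vanishes
-- unless every fibre of `g` has odd size, i.e. unless `g` is bijective.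
theorem sum_prod_boolSign_mul_prod_boolSign_comp (g : ι → ι) :
    ∑ ε : ι → Bool, (∏ j, (boolSign (ε j) : R)) * ∏ i, boolSign (ε (g i)) =
      if Bijective g then 2 ^ Fintype.card ι else 0 := by
  have hfiber (ε : ι → Bool) : (∏ j, (boolSign (ε j) : R)) * ∏ i, boolSign (ε (g i)) =
      ∏ j, boolSign (ε j) ^ (1 + #{i | g i = j}) := by
    rw [← Finset.prod_fiberwise' univ g fun j => boolSign (ε j), ← prod_mul_distrib]
    simp_rw [prod_const, pow_add, pow_one]
  simp_rw [hfiber, ← Fintype.prod_sum fun j b => (boolSign b : R) ^ (1 + #{i | g i = j}),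
    sum_boolSign_pow]
  split_ifs with hg
  · have hcard (j : ι) : #{i | g i = j} = 1 := by
      obtain ⟨i, rfl⟩ := hg.2 j
      simp [hg.injective.eq_iff, filter_eq']
    simp [hcard, one_add_one_eq_two]
  · obtain ⟨j, hj⟩ : ∃ j, ∀ i, g i ≠ j := by
      simpa [Surjective] using mt Finite.surjective_iff_bijective.1 hg
    exact prod_eq_zero (mem_univ j) (by simp [hj])

theorem MultilinearMap.polarization {X Y : Type*} [AddCommGroup X] [Module R X]
    [AddCommGroup Y] [Module R Y] (M : MultilinearMap R (fun _ : ι => X) Y)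
    (hsymm : ∀ (v : ι → X) (σ : Equiv.Perm ι), M (v ∘ σ) = M v) (x : ι → X) :
    ∑ ε : ι → Bool, (∏ j, (boolSign (ε j) : R)) • M (fun _ => ∑ j, (boolSign (ε j) : R) • x j) =
      (2 ^ Fintype.card ι * (Fintype.card ι).factorial : R) • M x := by
  have hexpand (ε : ι → Bool) : M (fun _ => ∑ j, (boolSign (ε j) : R) • x j) =
      ∑ g : ι → ι, (∏ i, (boolSign (ε (g i)) : R)) • M (x ∘ g) := by
    rw [M.map_sum fun _ j => (boolSign (ε j) : R) • x j]
    exact sum_congr rfl fun g _ => M.map_smul_univ _ _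
  have hperm (g : {g : ι → ι // Bijective g}) : (2 : R) ^ Fintype.card ι • M (x ∘ g) =
      (2 : R) ^ Fintype.card ι • M x := by
    simpa using congrArg _ (hsymm x (Equiv.bijectiveEquiv g))
  simp_rw [hexpand, smul_sum, smul_smul]
  rw [sum_comm]
  simp_rw [← sum_smul, sum_prod_boolSign_mul_prod_boolSign_comp, ite_smul, zero_smul]
  rw [← sum_filter, sum_subtype (p := fun g : ι → ι => Bijective g) _ fun g => by simp,
    Fintype.sum_equiv Equiv.bijectiveEquiv _ (fun _ => _) hperm, sum_const, card_univ,
    Fintype.card_perm, ← Nat.cast_smul_eq_nsmul R, smul_smul, mul_comm]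

end Polarization

open Set Metric

theorem MultilinearMap.map_diag_eq_pow_smul_map_diag_inv_smul {𝕜 ι X Y : Type*}
    [NormedField 𝕜] [Fintype ι] [NormedAddCommGroup X] [NormedSpace 𝕜 X] [AddCommGroup Y]
    [Module 𝕜 Y] (M : MultilinearMap 𝕜 (fun _ : ι => X) Y) {c : 𝕜} {y : X} (hy : ‖y‖ ≤ ‖c‖) :
    M (fun _ => y) = c ^ Fintype.card ι • M (fun _ => c⁻¹ • y) := by
  rw [← card_univ, ← prod_const, ← M.map_smul_univ]
  rcases eq_or_ne c 0 with hc | hc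
  · simp_all
  · simp [smul_inv_smul₀ hc]

theorem ContinuousMultilinearMap.isCompact_closure_image_pi_closedBall {𝕜 ι X Y : Type*}
    [RCLike 𝕜] [Fintype ι] [NormedAddCommGroup X] [NormedSpace 𝕜 X] [NormedAddCommGroup Y]
    [NormedSpace 𝕜 Y] (M : ContinuousMultilinearMap 𝕜 (fun _ : ι => X) Y)
    (hsymm : ∀ (v : ι → X) (σ : Equiv.Perm ι), M (v ∘ σ) = M v)
    (hdiag : IsCompact (closure ((fun x => M fun _ => x) '' closedBall (0 : X) 1))) :
    IsCompact (closure (M '' univ.pi fun _ => closedBall (0 : X) 1)) := by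
  classical
  set n := Fintype.card ι
  set c : 𝕜 := (n : 𝕜)
  set a : 𝕜 := 2 ^ n * n.factorial
  have ha : a ≠ 0 :=
    mul_ne_zero (pow_ne_zero _ two_ne_zero) (Nat.cast_ne_zero.2 n.factorial_ne_zero)
  -- by polarization, `combine` sends the values of `x ↦ M (fun _ => x)` at the points
  -- `(∑ j, ±xⱼ) / n` of the unit ball to `M x`
  let combine (y : (ι → Bool) → Y) : Y := a⁻¹ • ∑ ε, ((∏ j, boolSign (ε j)) * c ^ n) • y ε
  have hK : IsCompact (combine ''
      univ.pi fun _ => closure ((fun x => M fun _ => x) '' closedBall (0 : X) 1)) :=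
    (isCompact_univ_pi fun _ => hdiag).image (by fun_prop)
  refine hK.of_isClosed_subset isClosed_closure (closure_minimal ?_ hK.isClosed)
  rintro _ ⟨x, hx, rfl⟩
  let z (ε : ι → Bool) : X := ∑ j, (boolSign (ε j) : 𝕜) • x j
  have hz (ε : ι → Bool) : ‖z ε‖ ≤ ‖c‖ :=
    calc ‖z ε‖ ≤ ∑ j, ‖(boolSign (ε j) : 𝕜) • x j‖ := norm_sum_le _ _
      _ ≤ ∑ _j : ι, (1 : ℝ) := sum_le_sum fun j _ => by
        simpa [norm_smul, norm_boolSign] using hx j (mem_univ j)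
      _ = ‖c‖ := by simp [c, n]
  refine ⟨fun ε => M fun _ => c⁻¹ • z ε, fun ε _ => subset_closure ⟨_, ?_, rfl⟩, ?_⟩
  · rw [mem_closedBall_zero_iff, norm_smul, norm_inv]
    exact inv_mul_le_one_of_le₀ (hz ε) (norm_nonneg _)
  · have hterm (ε : ι → Bool) : ((∏ j, boolSign (ε j)) * c ^ n) • M (fun _ => c⁻¹ • z ε) =
        (∏ j, (boolSign (ε j) : 𝕜)) • M (fun _ => z ε) := by
      rw [mul_smul]
      exact congrArg _ (M.toMultilinearMap.map_diag_eq_pow_smul_map_diag_inv_smul (hz ε)).symm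
    simp only [combine, hterm]
    exact (congrArg (a⁻¹ • ·) (M.toMultilinearMap.polarization hsymm x)).trans
      (inv_smul_smul₀ ha _)

theorem IsCompact.exists_finset_norm_pow_le {𝕜 Y : Type*} [RCLike 𝕜] [NormedAddCommGroup Y]
    [NormedSpace 𝕜 Y] {K : Set Y} (hK : IsCompact K) (k : ℕ) {ε : ℝ} (hε : 0 < ε) :
    ∃ s : Finset (StrongDual 𝕜 Y), (∀ φ ∈ s, ‖φ‖ ≤ 1) ∧
      ∀ y ∈ K, ‖y‖ ^ k ≤ ∑ φ ∈ s, ‖φ y‖ ^ k + ε := by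
  classical
  choose φ hφ1 hφy using fun y : Y => exists_dual_vector'' 𝕜 y
  obtain ⟨t, -, hKt⟩ := hK.elim_nhds_subcover (fun z => {y | ‖y‖ ^ k < ‖φ z y‖ ^ k + ε})
    fun z _ => (isOpen_lt (by fun_prop) (by fun_prop)).mem_nhds (by simp [hφy, hε])
  refine ⟨t.image φ, by simpa using fun z _ => hφ1 z, fun y hy => ?_⟩
  obtain ⟨z, hz, hyz⟩ := mem_iUnion₂.1 (hKt hy)
  calc ‖y‖ ^ k ≤ ‖φ z y‖ ^ k + ε := hyz.le
    _ ≤ ∑ ψ ∈ t.image φ, ‖ψ y‖ ^ k + ε := by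
      gcongr
      exact single_le_sum (f := fun ψ : StrongDual 𝕜 Y => ‖ψ y‖ ^ k)
        (fun _ _ => by positivity) (mem_image_of_mem φ hz)

theorem Filter.tendsto_zero_of_forall_eventually_le_add {ι : Type*} {l : Filter ι}
    {a : ι → ℝ} (ha : ∀ i, 0 ≤ a i)
    (h : ∀ ε > 0, ∃ b : ι → ℝ, Tendsto b l (𝓝 0) ∧ ∀ᶠ i in l, a i ≤ b i + ε) :
    Tendsto a l (𝓝 0) := by
  rw [Metric.tendsto_nhds]
  intro ε hε
  obtain ⟨b, hb, hab⟩ := h (ε / 2) (half_pos hε)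
  filter_upwards [hab, Metric.tendsto_nhds.1 hb (ε / 2) (half_pos hε)] with i hi hbi
  rw [Real.dist_eq, sub_zero] at hbi ⊢
  rw [abs_of_nonneg (ha i)]
  linarith [le_abs_self (b i)]

section Integral

variable {α 𝕜 Y : Type*} [MeasurableSpace α] {μ : Measure α} [IsFiniteMeasure μ] [RCLike 𝕜]
  [NormedAddCommGroup Y] [NormedSpace 𝕜 Y] {K : Set Y}

theorem integral_norm_pow_le_sum_add (hK : IsCompact K) {F : α → Y}
    (hF : AEStronglyMeasurable F μ) (hFK : ∀ᵐ t ∂μ, F t ∈ K) {k : ℕ}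
    {s : Finset (StrongDual 𝕜 Y)} (hs : ∀ φ ∈ s, ‖φ‖ ≤ 1) {δ : ℝ}
    (hsK : ∀ y ∈ K, ‖y‖ ^ k ≤ ∑ φ ∈ s, ‖φ y‖ ^ k + δ) :
    ∫ t, ‖F t‖ ^ k ∂μ ≤ ∑ φ ∈ s, ∫ t, ‖φ (F t)‖ ^ k ∂μ + μ.real univ * δ := by
  obtain ⟨C, hC⟩ := hK.isBounded.exists_norm_le
  have hFC : ∀ᵐ t ∂μ, ‖F t‖ ≤ C := hFK.mono fun t ht => hC _ ht
  have hint : ∀ φ ∈ s, Integrable (fun t => ‖φ (F t)‖ ^ k) μ := fun φ hφ =>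
    .of_bound (by fun_prop) (C ^ k) <| hFC.mono fun t ht => by
      rw [norm_pow, norm_norm]
      exact pow_le_pow_left₀ (norm_nonneg _)
        ((φ.le_of_opNorm_le (hs φ hφ) _).trans (by simpa using ht)) k
  rw [← integral_finsetSum s hint, ← smul_eq_mul, ← integral_const,
    ← integral_add (integrable_finsetSum s hint) (integrable_const δ)]
  refine integral_mono_ae (.of_bound (by fun_prop) (C ^ k) ?_)
    ((integrable_finsetSum s hint).add (integrable_const δ)) ?_
  · filter_upwards [hFC] with t ht
    rw [norm_pow, norm_norm]
    exact pow_le_pow_left₀ (norm_nonneg _) ht k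
  · filter_upwards [hFK] with t ht
    simpa using hsK _ ht

theorem tendsto_integral_norm_pow_of_isCompact {ι : Type*} {l : Filter ι} (hK : IsCompact K)
    {F : ι → α → Y} (hF : ∀ i, AEStronglyMeasurable (F i) μ) (hFK : ∀ i, ∀ᵐ t ∂μ, F i t ∈ K)
    (k : ℕ) (hweak : ∀ φ : StrongDual 𝕜 Y, ‖φ‖ ≤ 1 →
      Tendsto (fun i => ∫ t, ‖φ (F i t)‖ ^ k ∂μ) l (𝓝 0)) :
    Tendsto (fun i => ∫ t, ‖F i t‖ ^ k ∂μ) l (𝓝 0) := by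
  refine tendsto_zero_of_forall_eventually_le_add
    (fun i => integral_nonneg fun t => by positivity) fun ε hε => ?_
  have hμ : 0 ≤ μ.real univ := measureReal_nonneg
  obtain ⟨s, hs, hsK⟩ := hK.exists_finset_norm_pow_le (𝕜 := 𝕜) k
    (div_pos hε (by positivity : 0 < μ.real univ + 1))
  refine ⟨fun i => ∑ φ ∈ s, ∫ t, ‖φ (F i t)‖ ^ k ∂μ, ?_, .of_forall fun i => ?_⟩
  · simpa using tendsto_finsetSum s fun φ hφ => hweak φ (hs φ hφ)
  · refine (integral_norm_pow_le_sum_add hK (hF i) (hFK i) hs hsK).trans ?_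
    gcongr
    rw [mul_div_assoc']
    exact div_le_of_le_mul₀ (by positivity) hε.le (by nlinarith)

end Integral

theorem stmt6_general {X Y : Type*} [NormedAddCommGroup X] [NormedSpace ℂ X]
    [NormedAddCommGroup Y] [NormedSpace ℂ Y]
    (l : ℕ)
    (M : ContinuousMultilinearMap ℂ (fun _ : Fin l => X) Y)
    (hsymm : ∀ (v : Fin l → X) (σ : Equiv.Perm (Fin l)), M (v ∘ σ) = M v)
    (P : X → Y) (hP : ∀ x, P x = M (fun _ => x))
    (hPcomp : IsCompact (closure (P '' Metric.closedBall 0 1)))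
    (k : ℕ)
    (f : ℕ → Fin l → ℝ → X)
    (hmeas : ∀ n j, AEStronglyMeasurable (f n j)
      (volume.restrict (Set.Ioc (0:ℝ) (2 * Real.pi))))
    (hbdd : ∀ n j, ∀ᵐ t ∂(volume.restrict (Set.Ioc (0:ℝ) (2 * Real.pi))), ‖f n j t‖ ≤ 1)
    (hweak : ∀ y : Y →L[ℂ] ℂ, ‖y‖ ≤ 1 →
      Tendsto (fun n => ∫ t in (0:ℝ)..(2 * Real.pi), ‖y (M (fun j => f n j t))‖ ^ k)
        atTop (nhds 0)) :
    Tendsto (fun n => ∫ t in (0:ℝ)..(2 * Real.pi), ‖M (fun j => f n j t)‖ ^ k)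
      atTop (nhds 0) := by
  have hK := M.isCompact_closure_image_pi_closedBall hsymm (funext hP ▸ hPcomp)
  simp only [intervalIntegral.integral_of_le Real.two_pi_pos.le] at hweak ⊢
  refine tendsto_integral_norm_pow_of_isCompact hK
    (fun n => M.cont.comp_aestronglyMeasurable_pi (hmeas n)) (fun n => ?_) k hweak
  filter_upwards [ae_all_iff.2 (hbdd n)] with t ht
  exact subset_closure ⟨_, fun j _ => mem_closedBall_zero_iff.2 (ht j), rfl⟩

/-- Let `P` be a compact continuous `l`-homogeneous polynomial with
(symmetric) polar `M`. If `f_n^{(j)} : 𝕋 → X` are strongly measurable with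
`‖f_n^{(j)}(t)‖ ≤ 1` a.e., and for every `y*` in the closed unit ball of `Y*`
`∫₀^{2π} |y*(M(f_n^{(1)}(t),…,f_n^{(l)}(t)))|^k dt → 0`, then
`∫₀^{2π} ‖M(f_n^{(1)}(t),…,f_n^{(l)}(t))‖^k dt → 0`. -/
theorem stmt6 {X Y : Type*} [NormedAddCommGroup X] [NormedSpace ℂ X] [CompleteSpace X]
    [NormedAddCommGroup Y] [NormedSpace ℂ Y] [CompleteSpace Y]
    (l : ℕ) (hl : 1 ≤ l)
    (M : ContinuousMultilinearMap ℂ (fun _ : Fin l => X) Y)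
    (hsymm : ∀ (v : Fin l → X) (σ : Equiv.Perm (Fin l)), M (v ∘ σ) = M v)
    (P : X → Y) (hP : ∀ x, P x = M (fun _ => x))
    (hPcomp : IsCompact (closure (P '' Metric.closedBall 0 1)))
    (k : ℕ) (hk : 1 ≤ k)
    (f : ℕ → Fin l → ℝ → X)
    (hmeas : ∀ n j, AEStronglyMeasurable (f n j)
      (volume.restrict (Set.Ioc (0:ℝ) (2 * Real.pi))))
    (hbdd : ∀ n j, ∀ᵐ t ∂(volume.restrict (Set.Ioc (0:ℝ) (2 * Real.pi))), ‖f n j t‖ ≤ 1)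
    (hweak : ∀ y : Y →L[ℂ] ℂ, ‖y‖ ≤ 1 →
      Tendsto (fun n => ∫ t in (0:ℝ)..(2 * Real.pi), ‖y (M (fun j => f n j t))‖ ^ k)
        atTop (nhds 0)) :
    Tendsto (fun n => ∫ t in (0:ℝ)..(2 * Real.pi), ‖M (fun j => f n j t)‖ ^ k)
      atTop (nhds 0) :=
  stmt6_general l M hsymm P hP hPcomp k f hmeas hbdd hweak
end

section
/- Let X and Y be complex Banach spaces, let l ≥ 1, and let T : X × ⋯ × X → Y be a continuous symmetric l-linear map which is compact, i.e. T(B_X × ⋯ × B_X) is relatively compact in Y. Let (y_m*)_{m≥1} be a sequence in the closed unit ball B_{Y*} of the dual Y* such that {y_m* ∘ T : m ≥ 1} is dense in {y* ∘ T : y* ∈ B_{Y*}} with respect to the operator norm on continuous l-linear forms. If (ζ_n^{(1)})_n, …, (ζ_n^{(l)})_n are bounded sequences in X such that lim_{n→∞} y_m*(T(ζ_n^{(1)}, …, ζ_n^{(l)})) = 0 for every m ≥ 1, then lim_{n→∞} ‖T(ζ_n^{(1)}, …, ζ_n^{(l)})‖_Y = 0. -/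
open Filter Topology

/-!
After rescaling the bounded sequences into the unit ball, `T (ζ n)` becomes a sequence in the
compact set `K = closure (T '' B)`, so it suffices that `0` is its only cluster point in `K`.
A cluster point `w` is killed by every `y m`. For `w ∈ K` one has `‖f w‖ ≤ ‖f ∘ T‖`, so by density
`‖g w‖` is at most `dist (g ∘ T) (y m ∘ T)`, which can be made arbitrarily small; taking for `g`
a norming functional of `w` (Hahn–Banach) gives `w = 0`.
-/

theorem MapClusterPt.eq_of_tendsto {α X : Type*} [TopologicalSpace X] [T2Space X] {F : Filter α}
    {u : α → X} {x y : X} (hx : MapClusterPt x F u) (hy : Tendsto u F (𝓝 y)) : x = y :=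
  eq_of_nhds_neBot (hx.neBot.mono (inf_le_inf_left _ hy))

theorem IsCompact.tendsto_of_forall_tendsto_comp {α ι X Z : Type*} [TopologicalSpace X]
    [TopologicalSpace Z] [T2Space Z] {K : Set X} (hK : IsCompact K) {l : Filter α}
    {u : α → X} (hu : ∀ᶠ n in l, u n ∈ K) {f : ι → X → Z} (hf : ∀ i, Continuous (f i)) {a : X}
    (hsep : ∀ x ∈ K, (∀ i, f i x = f i a) → x = a) (hlim : ∀ i, Tendsto (f i ∘ u) l (𝓝 (f i a))) :
    Tendsto u l (𝓝 a) :=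
  hK.tendsto_nhds_of_unique_mapClusterPt hu fun x hxK hx =>
    hsep x hxK fun i => ((hf i).continuousAt.mapClusterPt hx).eq_of_tendsto (hlim i)

theorem ContinuousLinearMap.norm_apply_le_of_mem_closure_image_unitBall
    {𝕜 ι F G : Type*} {E : ι → Type*} [NontriviallyNormedField 𝕜] [Fintype ι]
    [∀ i, SeminormedAddCommGroup (E i)] [∀ i, NormedSpace 𝕜 (E i)]
    [SeminormedAddCommGroup F] [NormedSpace 𝕜 F] [SeminormedAddCommGroup G] [NormedSpace 𝕜 G]
    (f : F →L[𝕜] G) (T : ContinuousMultilinearMap 𝕜 E F) {z : F}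
    (hz : z ∈ closure (T '' {v | ∀ i, ‖v i‖ ≤ 1})) :
    ‖f z‖ ≤ ‖f.compContinuousMultilinearMap T‖ := by
  refine closure_minimal ?_ (isClosed_le (continuous_norm.comp f.continuous) continuous_const) hz
  rintro _ ⟨v, hv, rfl⟩
  simpa using (f.compContinuousMultilinearMap T).le_opNorm_mul_prod_of_le hv

theorem ContinuousMultilinearMap.map_smul_const
    {𝕜 ι F : Type*} {E : ι → Type*} [CommSemiring 𝕜] [Fintype ι]
    [∀ i, AddCommMonoid (E i)] [∀ i, Module 𝕜 (E i)] [∀ i, TopologicalSpace (E i)]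
    [AddCommMonoid F] [Module 𝕜 F] [TopologicalSpace F]
    (T : ContinuousMultilinearMap 𝕜 E F) (c : 𝕜) (v : ∀ i, E i) :
    T (fun i => c • v i) = c ^ Fintype.card ι • T v := by
  simpa [Finset.prod_const] using T.map_smul_univ (fun _ => c) v

theorem eq_zero_of_mem_closure_image_unitBall_of_dual_dense
    {𝕜 ι ι' F : Type*} {E : ι → Type*} [RCLike 𝕜] [Fintype ι]
    [∀ i, SeminormedAddCommGroup (E i)] [∀ i, NormedSpace 𝕜 (E i)]
    [NormedAddCommGroup F] [NormedSpace 𝕜 F]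
    (T : ContinuousMultilinearMap 𝕜 E F) (y : ι' → F →L[𝕜] 𝕜)
    (hdense : ∀ g : F →L[𝕜] 𝕜, ‖g‖ ≤ 1 → g.compContinuousMultilinearMap T ∈
      closure (Set.range fun m => (y m).compContinuousMultilinearMap T))
    {w : F} (hw : w ∈ closure (T '' {v | ∀ i, ‖v i‖ ≤ 1})) (hyw : ∀ m, y m w = 0) : w = 0 := by
  by_contra hw0
  obtain ⟨g, hg, hgw⟩ := exists_dual_vector 𝕜 w (norm_ne_zero_iff.2 hw0)
  obtain ⟨_, ⟨m, rfl⟩, hm⟩ :=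
    Metric.mem_closure_iff.1 (hdense g hg.le) ‖w‖ (norm_pos_iff.2 hw0)
  have hsub : (g - y m).compContinuousMultilinearMap T =
      g.compContinuousMultilinearMap T - (y m).compContinuousMultilinearMap T := by
    ext; simp
  have hle : ‖w‖ ≤ dist (g.compContinuousMultilinearMap T) ((y m).compContinuousMultilinearMap T) :=
    calc ‖w‖ = ‖(g - y m) w‖ := by simp [hyw, hgw]
      _ ≤ _ := (g - y m).norm_apply_le_of_mem_closure_image_unitBall T hw
      _ = _ := by rw [hsub, dist_eq_norm]
  exact hle.not_gt hm

theorem stmt7_general {X Y : Type*} [NormedAddCommGroup X] [NormedSpace ℂ X]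
    [NormedAddCommGroup Y] [NormedSpace ℂ Y]
    (l : ℕ)
    (T : ContinuousMultilinearMap ℂ (fun _ : Fin l => X) Y)
    (hTcomp : IsCompact (closure (T '' {v : Fin l → X | ∀ i, ‖v i‖ ≤ 1})))
    (y : ℕ → (Y →L[ℂ] ℂ))
    (hdense : ∀ g : Y →L[ℂ] ℂ, ‖g‖ ≤ 1 →
      g.compContinuousMultilinearMap T ∈
        closure (Set.range fun m => (y m).compContinuousMultilinearMap T))
    (ζ : ℕ → Fin l → X) (C : ℝ) (hbdd : ∀ n j, ‖ζ n j‖ ≤ C)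
    (hweak : ∀ m, Tendsto (fun n => y m (T (ζ n))) atTop (nhds 0)) :
    Tendsto (fun n => ‖T (ζ n)‖) atTop (nhds 0) := by
  set r := max C 1
  have hr : 0 < r := one_pos.trans_le (le_max_right _ _)
  set c : ℂ := ((r⁻¹ : ℝ) : ℂ)
  have hc : c ≠ 0 := by simp [c, hr.ne']
  have hball : ∀ n i, ‖c • ζ n i‖ ≤ 1 := fun n i => by
    rw [norm_smul, Complex.norm_real, Real.norm_of_nonneg (inv_nonneg.2 hr.le)]
    exact inv_mul_le_one_of_le₀ ((hbdd n i).trans (le_max_left _ _)) hr.le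
  have hscale : ∀ n, T (fun i => c • ζ n i) = c ^ l • T (ζ n) := fun n => by
    simpa using T.map_smul_const c (ζ n)
  have hscaled : Tendsto (fun n => T (fun i => c • ζ n i)) atTop (𝓝 0) :=
    hTcomp.tendsto_of_forall_tendsto_comp
      (Eventually.of_forall fun n => subset_closure ⟨_, hball n, rfl⟩)
      (fun m => (y m).continuous)
      (fun w hw hyw => eq_zero_of_mem_closure_image_unitBall_of_dual_dense T y hdense hw
        (by simpa using hyw))
      (fun m => by simpa [Function.comp_def, hscale] using (hweak m).const_mul (c ^ l))
  have hT0 : Tendsto (fun n => T (ζ n)) atTop (𝓝 0) := by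
    simpa [hscale, hc] using hscaled.const_smul (c ^ l)⁻¹
  exact tendsto_zero_iff_norm_tendsto_zero.1 hT0

/-- Let `T` be a compact continuous symmetric `l`-linear map between
complex Banach spaces, and `(y_m*)` a sequence in the closed unit ball of `Y*` such
that `{y_m* ∘ T}` is dense in `{y* ∘ T : y* ∈ B_{Y*}}`. If `(ζ_n^{(j)})` are bounded
sequences in `X` with `y_m*(T(ζ_n^{(1)},…,ζ_n^{(l)})) → 0` for all `m`, then
`‖T(ζ_n^{(1)},…,ζ_n^{(l)})‖ → 0`. -/
theorem stmt7 {X Y : Type*} [NormedAddCommGroup X] [NormedSpace ℂ X] [CompleteSpace X]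
    [NormedAddCommGroup Y] [NormedSpace ℂ Y] [CompleteSpace Y]
    (l : ℕ) (hl : 1 ≤ l)
    (T : ContinuousMultilinearMap ℂ (fun _ : Fin l => X) Y)
    (hsymm : ∀ (v : Fin l → X) (σ : Equiv.Perm (Fin l)), T (v ∘ σ) = T v)
    (hTcomp : IsCompact (closure (T '' {v : Fin l → X | ∀ i, ‖v i‖ ≤ 1})))
    (y : ℕ → (Y →L[ℂ] ℂ)) (hy : ∀ m, ‖y m‖ ≤ 1)
    (hdense : ∀ g : Y →L[ℂ] ℂ, ‖g‖ ≤ 1 →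
      g.compContinuousMultilinearMap T ∈
        closure (Set.range fun m => (y m).compContinuousMultilinearMap T))
    (ζ : ℕ → Fin l → X) (C : ℝ) (hbdd : ∀ n j, ‖ζ n j‖ ≤ C)
    (hweak : ∀ m, Tendsto (fun n => y m (T (ζ n))) atTop (nhds 0)) :
    Tendsto (fun n => ‖T (ζ n)‖) atTop (nhds 0) :=
  stmt7_general l T hTcomp y hdense ζ C hbdd hweak
end

section
/- Let X and Y be complex Banach spaces, let l ≥ 1, and let T : X × ⋯ × X → Y be a continuous symmetric l-linear map which is compact, i.e. T(B_X × ⋯ × B_X) is relatively compact in Y. Let (y_m*)_{m≥1} be a sequence in the closed unit ball B_{Y*} of the dual Y* such that {y_m* ∘ T : m ≥ 1} is dense in {y* ∘ T : y* ∈ B_{Y*}} with respect to the operator norm on continuous l-linear forms. Then for every k ≥ 1 and every ε > 0 there exists a constant C > 0 such that for all x^{(1)}, …, x^{(l)} ∈ X: ‖T(x^{(1)}, …, x^{(l)})‖_Y^k ≤ ε · (‖x^{(1)}‖_X^k ⋯ ‖x^{(l)}‖_X^k) + C · Σ_{m=1}^{∞} 2^{−m} |y_m*(T(x^{(1)}, …,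 x^{(l)}))|^k. -/
/-!
Density of `{y_m* ∘ T}` together with Hahn–Banach shows that the `y_m*` norm every value of `T`,
hence (being of norm `≤ 1`) they separate the points of `K = closure (T (B_X × ⋯ × B_X))`. So the
series `q(w) = ∑ 2^{-m} |y_m*(w)|^k`, which is continuous on the bounded set `K`, is positive on
the compact part `{w ∈ K : ‖w‖^k ≥ ε}`, where `‖w‖^k / q(w)` is therefore bounded by some `C`.
Multilinearity reduces arbitrary arguments to arguments in the unit ball.
-/

open Set

theorem IsCompact.exists_pos_forall_le_add_mul {α : Type*} [TopologicalSpace α] [T2Space α]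
    {K : Set α} (hK : IsCompact K) {f g : α → ℝ} (hf : ContinuousOn f K) (hg : ContinuousOn g K)
    {ε : ℝ} (hε : 0 ≤ ε) (hg0 : ∀ x ∈ K, 0 ≤ g x) (hfg : ∀ x ∈ K, ε ≤ f x → 0 < g x) :
    ∃ C, 0 < C ∧ ∀ x ∈ K, f x ≤ ε + C * g x := by
  set K' := K ∩ f ⁻¹' Ici ε
  have hK' : IsCompact K' :=
    hK.of_isClosed_subset (hf.preimage_isClosed_of_isClosed hK.isClosed isClosed_Ici)
      inter_subset_left
  have hquot : ContinuousOn (fun x => f x / g x) K' :=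
    (hf.mono inter_subset_left).div (hg.mono inter_subset_left)
      fun x hx => (hfg x hx.1 hx.2).ne'
  obtain ⟨C, hC⟩ := hK'.exists_bound_of_continuousOn hquot
  refine ⟨max C 1, by positivity, fun x hx => ?_⟩
  have hCg : 0 ≤ max C 1 * g x := mul_nonneg (by positivity) (hg0 x hx)
  by_cases hεx : ε ≤ f x
  · have hgx := hfg x hx hεx
    have hle : f x / g x ≤ max C 1 :=
      (le_abs_self _).trans ((hC x ⟨hx, hεx⟩).trans (le_max_left _ _))
    rw [div_le_iff₀ hgx] at hle
    linarith
  · linarith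

section WeightedDualSum

variable {𝕜 F : Type*} [RCLike 𝕜] [NormedAddCommGroup F] [NormedSpace 𝕜 F]

/-- `∑_{m ≥ 1} 2^{-m} |y_m*(w)|^k`, with `y m` standing for `y_{m+1}*`. -/
noncomputable def weightedDualSum (y : ℕ → F →L[𝕜] 𝕜) (k : ℕ) (w : F) : ℝ :=
  ∑' m, (2 : ℝ)⁻¹ ^ (m + 1) * ‖y m w‖ ^ k

variable {y : ℕ → F →L[𝕜] 𝕜} {k : ℕ}

theorem weightedDualSum_nonneg (w : F) : 0 ≤ weightedDualSum y k w :=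
  tsum_nonneg fun _ => by positivity

theorem weightedDualSum_smul (c : 𝕜) (w : F) :
    weightedDualSum y k (c • w) = ‖c‖ ^ k * weightedDualSum y k w := by
  rw [weightedDualSum, weightedDualSum, ← tsum_mul_left]
  congr 1 with m
  rw [map_smul, smul_eq_mul, norm_mul, mul_pow]
  ring

theorem summable_inv_two_pow_succ_mul (M : ℝ) :
    Summable fun m : ℕ => (2 : ℝ)⁻¹ ^ (m + 1) * M :=
  (summable_nat_add_iff 1).2 (summable_geometric_of_lt_one (by norm_num) (by norm_num)) |>.mul_right M

theorem inv_two_pow_succ_mul_norm_apply_pow_le (hy : ∀ m, ‖y m‖ ≤ 1) (m : ℕ) {w : F} {M : ℝ}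
    (hw : ‖w‖ ≤ M) : (2 : ℝ)⁻¹ ^ (m + 1) * ‖y m w‖ ^ k ≤ (2 : ℝ)⁻¹ ^ (m + 1) * M ^ k := by
  have hyw : ‖y m w‖ ≤ M := ((y m).le_of_opNorm_le (hy m) w).trans (by rw [one_mul]; exact hw)
  gcongr

theorem summable_weightedDualSum (hy : ∀ m, ‖y m‖ ≤ 1) (w : F) :
    Summable fun m => (2 : ℝ)⁻¹ ^ (m + 1) * ‖y m w‖ ^ k :=
  (summable_inv_two_pow_succ_mul _).of_nonneg_of_le (fun _ => by positivity)
    fun m => inv_two_pow_succ_mul_norm_apply_pow_le hy m le_rfl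

theorem weightedDualSum_pos (hy : ∀ m, ‖y m‖ ≤ 1) {w : F} {m : ℕ} (hm : y m w ≠ 0) :
    0 < weightedDualSum y k w :=
  (summable_weightedDualSum hy w).tsum_pos (fun _ => by positivity) m
    (by have := norm_pos_iff.2 hm; positivity)

theorem continuousOn_weightedDualSum (hy : ∀ m, ‖y m‖ ≤ 1) {K : Set F}
    (hK : Bornology.IsBounded K) : ContinuousOn (weightedDualSum y k) K := by
  obtain ⟨M, hM⟩ := isBounded_iff_forall_norm_le.1 hK
  refine continuousOn_tsum (fun m => by fun_prop) (summable_inv_two_pow_succ_mul (M ^ k))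
    fun m w hw => ?_
  rw [Real.norm_of_nonneg (by positivity)]
  exact inv_two_pow_succ_mul_norm_apply_pow_le hy m (hM w hw)

end WeightedDualSum

section Norming

variable {𝕜 ι F : Type*} [RCLike 𝕜] [Fintype ι] {E : ι → Type*}
  [∀ i, NormedAddCommGroup (E i)] [∀ i, NormedSpace 𝕜 (E i)] [NormedAddCommGroup F]
  [NormedSpace 𝕜 F] {T : ContinuousMultilinearMap 𝕜 E F} {y : ℕ → F →L[𝕜] 𝕜}

/-- A norming functional `g` of `T v` is approximated by some `y m` in operator norm after
composing with `T`, hence at the point `v`. -/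
theorem exists_norm_apply_le_add (hdense : ∀ g : F →L[𝕜] 𝕜, ‖g‖ ≤ 1 →
      g.compContinuousMultilinearMap T ∈
        closure (range fun m => (y m).compContinuousMultilinearMap T))
    (v : ∀ i, E i) {δ : ℝ} (hδ : 0 < δ) : ∃ m, ‖T v‖ ≤ ‖y m (T v)‖ + δ := by
  rcases eq_or_ne (T v) 0 with h0 | h0
  · exact ⟨0, by rw [h0, norm_zero]; positivity⟩
  obtain ⟨g, hg1, hgv⟩ := exists_dual_vector 𝕜 (T v) (norm_ne_zero_iff.2 h0)
  set P := ∏ i, ‖v i‖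
  obtain ⟨_, ⟨m, rfl⟩, hm⟩ :=
    Metric.mem_closure_iff.1 (hdense g hg1.le) (δ / (P + 1)) (by positivity)
  refine ⟨m, ?_⟩
  have happrox : ‖g (T v) - y m (T v)‖ ≤ δ := calc
    ‖g (T v) - y m (T v)‖
        = ‖(g.compContinuousMultilinearMap T - (y m).compContinuousMultilinearMap T) v‖ := rfl
    _ ≤ δ / (P + 1) * P := by
        rw [dist_eq_norm] at hm
        exact (ContinuousMultilinearMap.le_opNorm _ v).trans (by gcongr)
    _ ≤ δ := by
        rw [div_mul_eq_mul_div, div_le_iff₀ (by positivity)]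
        nlinarith
  have hgnorm : ‖g (T v)‖ = ‖T v‖ := by simp [hgv]
  linarith [norm_sub_norm_le (g (T v)) (y m (T v))]

theorem eq_zero_of_mem_closure_range_of_forall_apply_eq_zero (hy : ∀ m, ‖y m‖ ≤ 1)
    (hdense : ∀ g : F →L[𝕜] 𝕜, ‖g‖ ≤ 1 →
      g.compContinuousMultilinearMap T ∈
        closure (range fun m => (y m).compContinuousMultilinearMap T))
    {w : F} (hw : w ∈ closure (range T)) (hyw : ∀ m, y m w = 0) : w = 0 := by
  refine norm_le_zero_iff.1 (le_of_forall_pos_lt_add fun δ hδ => ?_)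
  obtain ⟨_, ⟨v, rfl⟩, hv⟩ := Metric.mem_closure_iff.1 hw (δ / 3) (by positivity)
  obtain ⟨m, hm⟩ := exists_norm_apply_le_add hdense v (show 0 < δ / 3 by positivity)
  have hym : ‖y m (T v)‖ ≤ ‖w - T v‖ := calc
    ‖y m (T v)‖ = ‖y m (w - T v)‖ := by rw [map_sub, hyw, zero_sub, norm_neg]
    _ ≤ ‖w - T v‖ := (y m).le_of_opNorm_le (hy m) _ |>.trans_eq (one_mul _)
  rw [dist_eq_norm] at hv
  linarith [norm_le_norm_sub_add w (T v)]

theorem weightedDualSum_pos_of_mem_closure_range (hy : ∀ m, ‖y m‖ ≤ 1)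
    (hdense : ∀ g : F →L[𝕜] 𝕜, ‖g‖ ≤ 1 →
      g.compContinuousMultilinearMap T ∈
        closure (range fun m => (y m).compContinuousMultilinearMap T))
    {k : ℕ} {w : F} (hw : w ∈ closure (range T)) (hw0 : w ≠ 0) : 0 < weightedDualSum y k w := by
  obtain ⟨m, hm⟩ : ∃ m, y m w ≠ 0 := by
    by_contra! h
    exact hw0 (eq_zero_of_mem_closure_range_of_forall_apply_eq_zero hy hdense hw h)
  exact weightedDualSum_pos hy hm

end Norming

theorem exists_norm_le_one_eq_norm_smul (𝕜 : Type*) {E : Type*} [RCLike 𝕜]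
    [NormedAddCommGroup E] [NormedSpace 𝕜 E] (x : E) :
    ∃ u : E, ‖u‖ ≤ 1 ∧ x = (‖x‖ : 𝕜) • u := by
  rcases eq_or_ne x 0 with rfl | hx
  · exact ⟨0, by simp⟩
  refine ⟨(‖x‖ : 𝕜)⁻¹ • x, (norm_smul_inv_norm hx).le, ?_⟩
  rw [smul_smul, mul_inv_cancel₀ (by simpa using hx), one_smul]

theorem ContinuousMultilinearMap.exists_norm_le_one_apply_eq_smul {𝕜 ι F : Type*} [RCLike 𝕜]
    [Fintype ι] {E : ι → Type*} [∀ i, NormedAddCommGroup (E i)] [∀ i, NormedSpace 𝕜 (E i)]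
    [NormedAddCommGroup F] [NormedSpace 𝕜 F] (T : ContinuousMultilinearMap 𝕜 E F)
    (x : ∀ i, E i) :
    ∃ (c : 𝕜) (u : ∀ i, E i), ‖c‖ = ∏ i, ‖x i‖ ∧ (∀ i, ‖u i‖ ≤ 1) ∧ T x = c • T u := by
  choose u hu hxu using fun i => exists_norm_le_one_eq_norm_smul 𝕜 (x i)
  refine ⟨∏ i, (‖x i‖ : 𝕜), u, by simp [norm_prod], hu, ?_⟩
  rw [← T.map_smul_univ]
  exact congrArg T (funext hxu)

theorem stmt8_general {X Y : Type*} [NormedAddCommGroup X] [NormedSpace ℂ X]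
    [NormedAddCommGroup Y] [NormedSpace ℂ Y]
    (l : ℕ)
    (T : ContinuousMultilinearMap ℂ (fun _ : Fin l => X) Y)
    (hTcomp : IsCompact (closure (T '' {v : Fin l → X | ∀ i, ‖v i‖ ≤ 1})))
    (y : ℕ → (Y →L[ℂ] ℂ)) (hy : ∀ m, ‖y m‖ ≤ 1)
    (hdense : ∀ g : Y →L[ℂ] ℂ, ‖g‖ ≤ 1 →
      g.compContinuousMultilinearMap T ∈
        closure (Set.range fun m => (y m).compContinuousMultilinearMap T)) :
    ∀ k : ℕ, 1 ≤ k → ∀ ε : ℝ, 0 < ε → ∃ C : ℝ, 0 < C ∧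
      ∀ x : Fin l → X,
        ‖T x‖ ^ k ≤ ε * ∏ j, ‖x j‖ ^ k +
          C * ∑' m : ℕ, (2 : ℝ)⁻¹ ^ (m + 1) * ‖y m (T x)‖ ^ k := by
  intro k hk ε hε
  obtain ⟨C, hC, hbound⟩ := hTcomp.exists_pos_forall_le_add_mul (f := fun w => ‖w‖ ^ k)
    (g := weightedDualSum y k) (by fun_prop) (continuousOn_weightedDualSum hy hTcomp.isBounded)
    hε.le (fun w _ => weightedDualSum_nonneg w) fun w hw hεw => by
      refine weightedDualSum_pos_of_mem_closure_range hy hdense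
        (closure_mono (image_subset_range _ _) hw) ?_
      rintro rfl
      simp [zero_pow (by omega : k ≠ 0)] at hεw
      linarith
  refine ⟨C, hC, fun x => ?_⟩
  obtain ⟨c, u, hc, hu, hTx⟩ := T.exists_norm_le_one_apply_eq_smul x
  have hck : ‖c‖ ^ k = ∏ j, ‖x j‖ ^ k := by rw [hc, Finset.prod_pow]
  calc ‖T x‖ ^ k = (∏ j, ‖x j‖ ^ k) * ‖T u‖ ^ k := by rw [hTx, norm_smul, mul_pow, hck]
    _ ≤ (∏ j, ‖x j‖ ^ k) * (ε + C * weightedDualSum y k (T u)) :=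
        mul_le_mul_of_nonneg_left (hbound _ (subset_closure ⟨u, hu, rfl⟩)) (by positivity)
    _ = ε * ∏ j, ‖x j‖ ^ k + C * weightedDualSum y k (T x) := by
        rw [hTx, weightedDualSum_smul, hck]; ring

/-- Let `T` be a compact continuous symmetric `l`-linear map between
complex Banach spaces, and `(y_m*)_{m ≥ 1}` a sequence in the closed unit ball of `Y*`
(indexed here by `m : ℕ`, with `y m` standing for `y_{m+1}*`) such that `{y_m* ∘ T}`
is dense in `{y* ∘ T : y* ∈ B_{Y*}}`. Then for every `k ≥ 1` and `ε > 0` there is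
`C > 0` with
`‖T x‖^k ≤ ε ∏ⱼ ‖x⁽ʲ⁾‖^k + C ∑_{m=1}^∞ 2^{-m} |y_m*(T x)|^k` for all `x⁽ʲ⁾ ∈ X`. -/
theorem stmt8 {X Y : Type*} [NormedAddCommGroup X] [NormedSpace ℂ X] [CompleteSpace X]
    [NormedAddCommGroup Y] [NormedSpace ℂ Y] [CompleteSpace Y]
    (l : ℕ) (hl : 1 ≤ l)
    (T : ContinuousMultilinearMap ℂ (fun _ : Fin l => X) Y)
    (hsymm : ∀ (v : Fin l → X) (σ : Equiv.Perm (Fin l)), T (v ∘ σ) = T v)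
    (hTcomp : IsCompact (closure (T '' {v : Fin l → X | ∀ i, ‖v i‖ ≤ 1})))
    (y : ℕ → (Y →L[ℂ] ℂ)) (hy : ∀ m, ‖y m‖ ≤ 1)
    (hdense : ∀ g : Y →L[ℂ] ℂ, ‖g‖ ≤ 1 →
      g.compContinuousMultilinearMap T ∈
        closure (Set.range fun m => (y m).compContinuousMultilinearMap T)) :
    ∀ k : ℕ, 1 ≤ k → ∀ ε : ℝ, 0 < ε → ∃ C : ℝ, 0 < C ∧
      ∀ x : Fin l → X,
        ‖T x‖ ^ k ≤ ε * ∏ j, ‖x j‖ ^ k +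
          C * ∑' m : ℕ, (2 : ℝ)⁻¹ ^ (m + 1) * ‖y m (T x)‖ ^ k :=
  stmt8_general l T hTcomp y hy hdense
end
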